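/- arXiv:2605.04935 — 4 statements merged into one kernel-verified Lean document; each statement's English description precedes it below -/
import Mathlib

section
/- Let k be a field, m ≥ 1 an integer, n = 2m+1, and w = (a_0,…,a_n) ∈ k^{n+1}. Let A_{m,m;r} denote the (m+1)×(m+1) Hankel matrix (a_{i+j+r})_{0≤i,j≤m}. Then the binary form Cat_{m,m}(x,y:w) = det(x·A_{m,m;1} − y·A_{m,m;0}), which is homogeneous of degree m+1 in x and y, is apolar to w; that is, (w, Cat_{m,m}(x,y:w)·h) = 0 for every binary form h of degree m over k. -/
open Finset

/-- The pairing between `w ∈ V_n` (encoded as a coefficient tuple) and a binary `n`-ic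
form given as a polynomial in the variables `x = X 0`, `y = X 1`:
`(w, v) = ∑ i, w i * (coefficient of x^(n-i) * y^i in v)`. -/
noncomputable def pairPoly {k : Type*} [CommRing k] (n : ℕ) (w : Fin (n + 1) → k)
    (v : MvPolynomial (Fin 2) k) : k :=
  ∑ i : Fin (n + 1), w i *
    MvPolynomial.coeff (Finsupp.single 0 (n - (i : ℕ)) + Finsupp.single 1 (i : ℕ)) v

/-- The catalecticant covariant `Cat_{m,m}(x,y:w) = det (x•A_{m,m;1} - y•A_{m,m;0})` of
`w ∈ V_{2m+1}`, regarded as a polynomial in the variables `x = X 0` and `y = X 1`. -/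
noncomputable def catPoly {k : Type*} [CommRing k] (m : ℕ)
    (w : Fin (2 * m + 1 + 1) → k) : MvPolynomial (Fin 2) k :=
  Matrix.det (Matrix.of fun i j : Fin (m + 1) =>
    MvPolynomial.X 0 * MvPolynomial.C (w ⟨(i : ℕ) + (j : ℕ) + 1, by omega⟩) -
    MvPolynomial.X 1 * MvPolynomial.C (w ⟨(i : ℕ) + (j : ℕ), by omega⟩))

/-!
Let `P = (a_{i+s})` be the `(m+1) × (m+2)` Hankel matrix of `w` and `e_s` its signed maximal
minors. Right multiplication by an upper triangular matrix of determinant `x^(m+1)` turns `P` with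
the row of monomials `x^(m+1-s) y^s` on top into a matrix with first row `(x^(m+1), 0, …, 0)` and
lower right block `x A_{m,m;1} - y A_{m,m;0}`; cancelling `x^(m+1)` gives
`Cat = ∑ e_s x^(m+1-s) y^s`. Pairing `w` with `Cat · x^(m-j) y^j` then yields `∑ e_s a_{s+j}`,
the Laplace expansion of `P` with its own row `j` put on top, which vanishes.
-/

namespace Catalecticant

open Matrix MvPolynomial

section MaximalMinors

variable {R : Type*} [CommRing R] {n : ℕ}

def signedMinor (P : Matrix (Fin (n + 1)) (Fin (n + 2)) R) (s : Fin (n + 2)) : R :=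
  (-1) ^ (s : ℕ) * (P.submatrix id s.succAbove).det

theorem det_of_vecCons (v : Fin (n + 2) → R) (P : Matrix (Fin (n + 1)) (Fin (n + 2)) R) :
    (of (vecCons v P)).det = ∑ s, v s * signedMinor P s := by
  rw [det_succ_row_zero]
  refine sum_congr rfl fun s _ => ?_
  change (-1) ^ (s : ℕ) * v s * (P.submatrix id s.succAbove).det = _
  rw [signedMinor]
  ring

theorem sum_signedMinor_mul_row (P : Matrix (Fin (n + 1)) (Fin (n + 2)) R) (i : Fin (n + 1)) :
    ∑ s, signedMinor P s * P i s = 0 := by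
  simp_rw [mul_comm (signedMinor P _)]
  rw [← det_of_vecCons]
  exact det_zero_of_row_eq (Fin.succ_ne_zero i).symm rfl

theorem signedMinor_map {S : Type*} [CommRing S] (f : R →+* S)
    (P : Matrix (Fin (n + 1)) (Fin (n + 2)) R) (s : Fin (n + 2)) :
    signedMinor (P.map f) s = f (signedMinor P s) := by
  simp [signedMinor, RingHom.map_det, RingHom.mapMatrix_apply, ← submatrix_map]

end MaximalMinors

section Pencil

variable {S : Type*} [CommRing S] {n : ℕ}

def pencil (P : Matrix (Fin (n + 1)) (Fin (n + 2)) S) (x y : S) :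
    Matrix (Fin (n + 1)) (Fin (n + 1)) S :=
  of fun i j => x * P i j.succ - y * P i j.castSucc

def shiftColumns (x y : S) : Matrix (Fin (n + 2)) (Fin (n + 2)) S :=
  of fun s => Fin.cases (if s = 0 then 1 else 0)
    fun j => (if s = j.succ then x else 0) - (if s = j.castSucc then y else 0)

theorem det_shiftColumns (x y : S) :
    (shiftColumns (n := n) x y).det = x ^ (n + 1) := by
  rw [det_of_isUpperTriangular]
  · simp [Fin.prod_univ_succ, shiftColumns, Fin.castSucc_lt_succ.ne']
  · intro s l (hls : l < s)
    induction l using Fin.cases with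
    | zero => simp [shiftColumns, Fin.pos_iff_ne_zero.mp hls]
    | succ j =>
      have hs : s ≠ j.castSucc := (Fin.castSucc_lt_succ.trans hls).ne'
      simp [shiftColumns, hls.ne', hs]

theorem mul_shiftColumns_zero (M : Matrix (Fin (n + 2)) (Fin (n + 2)) S) (x y : S)
    (i : Fin (n + 2)) : (M * shiftColumns (n := n) x y) i 0 = M i 0 := by
  simp [mul_apply, shiftColumns]

theorem mul_shiftColumns_succ (M : Matrix (Fin (n + 2)) (Fin (n + 2)) S) (x y : S)
    (i : Fin (n + 2)) (j : Fin (n + 1)) :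
    (M * shiftColumns (n := n) x y) i j.succ = x * M i j.succ - y * M i j.castSucc := by
  simp [mul_apply, shiftColumns, mul_sub, sum_sub_distrib, mul_comm]

theorem det_pencil (P : Matrix (Fin (n + 1)) (Fin (n + 2)) S) {x : S} (hx : IsRegular x)
    (y : S) : (pencil P x y).det =
      ∑ s : Fin (n + 2), signedMinor P s * (x ^ (n + 1 - s) * y ^ (s : ℕ)) := by
  set v : Fin (n + 2) → S := fun s => x ^ (n + 1 - s) * y ^ (s : ℕ) with hv
  set Q : Matrix (Fin (n + 2)) (Fin (n + 2)) S := of (vecCons v P) * shiftColumns x y with hQ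
  have hQ_top : ∀ j : Fin (n + 1), Q 0 j.succ = 0 := by
    intro j
    have : n + 1 - j = n + 1 - (j + 1) + 1 := by omega
    rw [hQ, mul_shiftColumns_succ]
    change x * v j.succ - y * v j.castSucc = 0
    simp only [hv, Fin.val_succ, Fin.val_castSucc, this]
    ring
  have hQ_minor : Q.submatrix Fin.succ Fin.succ = pencil P x y := by
    ext i j
    rw [submatrix_apply, hQ, mul_shiftColumns_succ]
    rfl
  have hQ_det : Q.det = x ^ (n + 1) * (pencil P x y).det := by
    rw [det_succ_row_zero, Fin.sum_univ_succ]
    simp only [hQ_top, mul_zero, zero_mul, sum_const_zero, add_zero]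
    rw [Fin.succAbove_zero, hQ_minor, hQ, mul_shiftColumns_zero]
    change (-1) ^ 0 * (x ^ (n + 1 - 0) * y ^ 0) * _ = _
    rw [Nat.sub_zero, pow_zero, pow_zero, mul_one, one_mul]
  rw [hQ, det_mul, det_shiftColumns, det_of_vecCons, mul_comm] at hQ_det
  simp_rw [mul_comm (signedMinor P _)]
  exact ((hx.pow (n + 1)).left hQ_det).symm

end Pencil

section BinaryForms

variable {k : Type*} [CommRing k]

def hankel (m : ℕ) (w : Fin (2 * m + 1 + 1) → k) : Matrix (Fin (m + 1)) (Fin (m + 2)) k :=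
  of fun i s => w ⟨i + s, by omega⟩

theorem catPoly_eq_det_pencil (m : ℕ) (w : Fin (2 * m + 1 + 1) → k) :
    catPoly m w = (pencil ((hankel m w).map C) (X 0) (X 1)).det :=
  rfl

theorem catPoly_eq_sum (m : ℕ) (w : Fin (2 * m + 1 + 1) → k) :
    catPoly m w = ∑ s : Fin (m + 2),
      C (signedMinor (hankel m w) s) * (X 0 ^ (m + 1 - s) * X 1 ^ (s : ℕ)) := by
  rw [catPoly_eq_det_pencil, det_pencil _ isRegular_X]
  simp only [signedMinor_map]

theorem isHomogeneous_catPoly (m : ℕ) (w : Fin (2 * m + 1 + 1) → k) :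
    (catPoly m w).IsHomogeneous (m + 1) := by
  rw [catPoly_eq_sum]
  refine IsHomogeneous.sum _ _ _ fun s _ => ?_
  convert (isHomogeneous_C _ _).mul
    ((isHomogeneous_X_pow _ _).mul (isHomogeneous_X_pow _ _)) using 1
  have := s.isLt
  omega

theorem pairPoly_sum {n : ℕ} (w : Fin (n + 1) → k) {ι : Type*} (s : Finset ι)
    (f : ι → MvPolynomial (Fin 2) k) :
    pairPoly n w (∑ i ∈ s, f i) = ∑ i ∈ s, pairPoly n w (f i) := by
  simp only [pairPoly, coeff_sum, mul_sum]
  exact sum_comm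

theorem pairPoly_monomial {n : ℕ} (w : Fin (n + 1) → k) {t : ℕ} (ht : t ≤ n) (c : k) :
    pairPoly n w (monomial (Finsupp.single 0 (n - t) + Finsupp.single 1 t) c) =
      w ⟨t, by omega⟩ * c := by
  rw [pairPoly, sum_eq_single ⟨t, by omega⟩]
  · simp
  · intro i _ hi
    have hne : Finsupp.single 0 (n - t) + Finsupp.single 1 t ≠
        Finsupp.single (0 : Fin 2) (n - i) + Finsupp.single 1 (i : ℕ) := fun h =>
      hi (Fin.ext (by simpa using (DFunLike.congr_fun h 1).symm))
    rw [coeff_monomial, if_neg hne, mul_zero]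
  · simp

theorem pairPoly_catPoly_mul_monomial (m : ℕ) (w : Fin (2 * m + 1 + 1) → k) {d : Fin 2 →₀ ℕ}
    (hd : d 0 + d 1 = m) (c : k) : pairPoly (2 * m + 1) w (catPoly m w * monomial d c) = 0 := by
  have hj : d 1 < m + 1 := by omega
  have hexp : ∀ s : Fin (m + 2), Finsupp.single 0 (m + 1 - s) + Finsupp.single 1 (s : ℕ) + d =
      Finsupp.single 0 (2 * m + 1 - (d 1 + s)) + Finsupp.single 1 (d 1 + s) := by
    intro s
    refine Finsupp.ext (Fin.forall_fin_two.mpr ⟨?_, ?_⟩) <;>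
      simp only [Finsupp.add_apply, Finsupp.single_eq_same, ne_eq, zero_ne_one, one_ne_zero,
        not_false_eq_true, Finsupp.single_eq_of_ne] <;>
      omega
  rw [catPoly_eq_sum, sum_mul, pairPoly_sum]
  calc _ = ∑ s : Fin (m + 2), signedMinor (hankel m w) s * hankel m w ⟨d 1, hj⟩ s * c := by
        refine sum_congr rfl fun s _ => ?_
        rw [X_pow_eq_monomial, X_pow_eq_monomial, monomial_mul, C_mul_monomial, monomial_mul, hexp,
          pairPoly_monomial w (by omega)]
        simp only [hankel, of_apply]
        ring
    _ = 0 := by rw [← sum_mul, sum_signedMinor_mul_row, zero_mul]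

end BinaryForms

end Catalecticant

open Catalecticant MvPolynomial

theorem stmt1_general {k : Type*} [Field k] (m : ℕ)
    (w : Fin (2 * m + 1 + 1) → k) :
    (catPoly m w).IsHomogeneous (m + 1) ∧
    ∀ h : MvPolynomial (Fin 2) k, h.IsHomogeneous m →
      pairPoly (2 * m + 1) w (catPoly m w * h) = 0 := by
  refine ⟨isHomogeneous_catPoly m w, fun h hh => ?_⟩
  rw [h.as_sum, mul_sum, pairPoly_sum]
  refine sum_eq_zero fun d hd => pairPoly_catPoly_mul_monomial m w ?_ _
  have hdeg := hh (mem_support_iff.mp hd)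
  simpa [Finsupp.weight_apply, Finsupp.sum_fintype, Fin.sum_univ_two] using hdeg

/-- For `w ∈ V_{2m+1}`, the catalecticant covariant `Cat_{m,m}(x,y:w)`, which is a binary
form homogeneous of degree `m+1`, is apolar to `w`: `(w, Cat_{m,m}(x,y:w)·h) = 0` for
every binary form `h` of degree `m`. -/
theorem stmt1 {k : Type*} [Field k] (m : ℕ) (hm : 1 ≤ m)
    (w : Fin (2 * m + 1 + 1) → k) :
    (catPoly m w).IsHomogeneous (m + 1) ∧
    ∀ h : MvPolynomial (Fin 2) k, h.IsHomogeneous m →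
      pairPoly (2 * m + 1) w (catPoly m w * h) = 0 :=
  stmt1_general m w
end

section
/- Let k be a field and w ∈ V_5 a nonzero element of the dual space of binary quintic forms over k. If ℓ and ℓ' are nonzero linear binary forms over k such that both ℓ² and ℓ'² are apolar to w, then ℓ' = c·ℓ for some c ∈ k^×; i.e., a nonzero linear form whose square is apolar to w is unique up to scalar. -/
open Finset

/-- Multiplication of binary forms encoded by coefficient tuples: a binary form
`∑ i, f i • x^(a-i) * y^i` of degree `a` is encoded as the tuple `f : Fin (a+1) → k`,
and multiplication of forms is convolution of coefficient tuples. -/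
def formMul {k : Type*} [CommRing k] {a b : ℕ} (f : Fin (a + 1) → k)
    (g : Fin (b + 1) → k) : Fin (a + b + 1) → k :=
  fun i => ∑ q : Fin (a + 1) × Fin (b + 1),
    if (q.1 : ℕ) + (q.2 : ℕ) = (i : ℕ) then f q.1 * g q.2 else 0

/-- The pairing `(w, v) = ∑ i, w i * v i` between `V_n` and `V_n^*`. -/
def pair {k : Type*} [CommRing k] {n : ℕ} (w v : Fin (n + 1) → k) : k :=
  ∑ i, w i * v i

private lemma sq_mul_eq_zero_aux {k : Type*} [Field k] {x y : k}
    (h : x ^ 2 * y = 0) (hx : x ≠ 0) : y = 0 := by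
  rcases mul_eq_zero.mp h with h' | h'
  · exact (hx ((pow_eq_zero_iff two_ne_zero).mp h')).elim
  · exact h'

/-- For nonzero `w ∈ V₅`, a nonzero linear form whose square is apolar to `w` is unique
up to a nonzero scalar. -/
theorem stmt5 {k : Type*} [Field k] (w : Fin 6 → k) (hw : w ≠ 0)
    (l l' : Fin 2 → k) (hl : l ≠ 0) (hl' : l' ≠ 0)
    (h1 : ∀ h : Fin 4 → k, pair w (formMul (formMul l l) h) = 0)
    (h2 : ∀ h : Fin 4 → k, pair w (formMul (formMul l' l') h) = 0) :
    ∃ c : k, c ≠ 0 ∧ l' = c • l := by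
  set a := l 0 with ha0
  set b := l 1 with hb0
  set c := l' 0 with hc0
  set d := l' 1 with hd0
  by_cases hD : a * d - b * c = 0
  · -- proportional case
    rcases eq_or_ne a 0 with ha | ha
    · have hb : b ≠ 0 := by
        intro hb
        apply hl
        funext i; fin_cases i
        · exact ha
        · exact hb
      have hc : c = 0 := by
        have : b * c = 0 := by linear_combination -hD + d * ha
        rcases mul_eq_zero.mp this with h | h
        · exact absurd h hb
        · exact h
      have hd : d ≠ 0 := by
        intro hd
        apply hl'
        funext i; fin_cases i
        · exact hc
        · exact hd
      refine ⟨d / b, div_ne_zero hd hb, ?_⟩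
      funext i; fin_cases i
      · show c = d / b * a
        rw [ha, hc]; ring
      · show d = d / b * b
        field_simp
    · have hc : c ≠ 0 := by
        intro hc
        have hd : d = 0 := by
          have : a * d = 0 := by linear_combination hD + b * hc
          rcases mul_eq_zero.mp this with h | h
          · exact absurd h ha
          · exact h
        apply hl'
        funext i; fin_cases i
        · exact hc
        · exact hd
      refine ⟨c / a, div_ne_zero hc ha, ?_⟩
      funext i; fin_cases i
      · show c = c / a * a
        field_simp
      · show d = c / a * b
        field_simp
        linear_combination hD
  · -- independent case: derive w = 0, contradiction
    exfalso
    have E0 := h1 ![1,0,0,0]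
    have E1 := h1 ![0,1,0,0]
    have E2 := h1 ![0,0,1,0]
    have E3 := h1 ![0,0,0,1]
    have F0 := h2 ![1,0,0,0]
    have F1 := h2 ![0,1,0,0]
    have F2 := h2 ![0,0,1,0]
    have F3 := h2 ![0,0,0,1]
    simp (config := { decide := true })
      [pair, formMul, Fintype.sum_prod_type, Fin.sum_univ_six, Fin.sum_univ_four,
       Fin.sum_univ_three, Fin.sum_univ_two, ← ha0, ← hb0, ← hc0, ← hd0]
      at E0 E1 E2 E3 F0 F1 F2 F3
    -- G_j : (ad+bc) w_j + 2bd w_{j+1} = 0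
    have G1 : (a*d + b*c) * w 1 + 2*b*d * w 2 = 0 := by
      apply mul_left_cancel₀ hD
      linear_combination d^2 * E1 - b^2 * F1
    have G2 : (a*d + b*c) * w 2 + 2*b*d * w 3 = 0 := by
      apply mul_left_cancel₀ hD
      linear_combination d^2 * E2 - b^2 * F2
    have G3 : (a*d + b*c) * w 3 + 2*b*d * w 4 = 0 := by
      apply mul_left_cancel₀ hD
      linear_combination d^2 * E3 - b^2 * F3
    -- H_j : 2ac w_{j+1} + (ad+bc) w_{j+2} = 0
    have H0 : 2*a*c * w 1 + (a*d + b*c) * w 2 = 0 := by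
      apply mul_left_cancel₀ hD
      linear_combination a^2 * F0 - c^2 * E0
    have H1 : 2*a*c * w 2 + (a*d + b*c) * w 3 = 0 := by
      apply mul_left_cancel₀ hD
      linear_combination a^2 * F1 - c^2 * E1
    have H2 : 2*a*c * w 3 + (a*d + b*c) * w 4 = 0 := by
      apply mul_left_cancel₀ hD
      linear_combination a^2 * F2 - c^2 * E2
    have hD2 : (a*d - b*c) * (a*d - b*c) ≠ 0 := mul_ne_zero hD hD
    have w1 : w 1 = 0 := by
      apply mul_left_cancel₀ hD2
      linear_combination (a*d + b*c) * G1 - 2*b*d * H0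
    have w2 : w 2 = 0 := by
      apply mul_left_cancel₀ hD2
      linear_combination (a*d + b*c) * G2 - 2*b*d * H1
    have w3 : w 3 = 0 := by
      apply mul_left_cancel₀ hD2
      linear_combination (a*d + b*c) * G3 - 2*b*d * H2
    have w4 : w 4 = 0 := by
      apply mul_left_cancel₀ hD2
      linear_combination (a*d + b*c) * H2 - 2*a*c * G3
    have w0a : a ^ 2 * w 0 = 0 := by linear_combination E0 - 2*a*b*w1 - b^2*w2
    have w0c : c ^ 2 * w 0 = 0 := by linear_combination F0 - 2*c*d*w1 - d^2*w2
    have w5b : b ^ 2 * w 5 = 0 := by linear_combination E3 - 2*a*b*w4 - a^2*w3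
    have w5d : d ^ 2 * w 5 = 0 := by linear_combination F3 - 2*c*d*w4 - c^2*w3
    have w0 : w 0 = 0 := by
      rcases eq_or_ne a 0 with ha | ha
      · have hc : c ≠ 0 := by
          intro hc; apply hD; rw [ha, hc]; ring
        exact sq_mul_eq_zero_aux w0c hc
      · exact sq_mul_eq_zero_aux w0a ha
    have w5 : w 5 = 0 := by
      rcases eq_or_ne b 0 with hb | hb
      · have hd : d ≠ 0 := by
          intro hd; apply hD; rw [hb, hd]; ring
        exact sq_mul_eq_zero_aux w5d hd
      · exact sq_mul_eq_zero_aux w5b hb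
    apply hw
    funext i; fin_cases i
    · exact w0
    · exact w1
    · exact w2
    · exact w3
    · exact w4
    · exact w5
end

section
/- Let p be a prime and w ∈ V_5. Then #{ ([ℓ],[c]) ∈ P(V_1^*)×P(V_3^*) : (w, ℓ²c) = 0 } = (p+1)(p²+p+1) + p³·Ñ, where Ñ = p+1 if w = 0; Ñ = 1 if w ≠ 0 and there exists a nonzero linear form ℓ over 𝔽_p with ℓ² apolar to w; and Ñ = 0 otherwise. -/
open Finset

/-!
Since `(w, ℓ²c) = (ℓ² ⌟ w, c)`, the classes `[c]` paired with a fixed `[ℓ]` form the hyperplane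
`(ℓ² ⌟ w)^⊥` of `P(V_3^*)`, with `p² + p + 1` points, unless `ℓ² ⌟ w = 0` (that is, `ℓ²` is
apolar to `w`), when they form all of `P(V_3^*)`, with `p³` points more. Summing over the `p + 1`
points `[ℓ]` gives `(p + 1)(p² + p + 1) + p³ Ñ`, where `Ñ` counts the `[ℓ]` with `ℓ²` apolar to `w`.
If `w = 0` every `[ℓ]` counts. Otherwise at most one does: for independent `ℓ, ℓ'` the products
`ℓ²·V_3^* + ℓ'²·V_3^*` exhaust `V_5^*`, so `w` could not be apolar to both squares.
-/

open Matrix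

section Forms

variable {k : Type*} [CommRing k] {a b : ℕ}

-- the contraction `f ⌟ w`
def contract (w : Fin (a + b + 1) → k) (f : Fin (a + 1) → k) : Fin (b + 1) → k :=
  fun j => ∑ i, f i * w ⟨i + j, by omega⟩

theorem pair_formMul (w : Fin (a + b + 1) → k) (f : Fin (a + 1) → k) (g : Fin (b + 1) → k) :
    pair w (formMul f g) = pair (contract w f) g := by
  simp only [pair, formMul, contract, Finset.mul_sum, Finset.sum_mul, mul_ite, mul_zero]
  rw [Finset.sum_comm, Fintype.sum_prod_type, Finset.sum_comm]
  refine Finset.sum_congr rfl fun j _ => Finset.sum_congr rfl fun i _ => ?_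
  rw [Finset.sum_eq_single ⟨i + j, by omega⟩ (fun m _ hm => if_neg fun h => hm (Fin.ext h.symm))
    (by simp), if_pos rfl]
  ring

lemma formMul_smul_left (t : k) (f : Fin (a + 1) → k) (g : Fin (b + 1) → k) :
    formMul (t • f) g = t • formMul f g := by
  ext i
  simp [formMul, Finset.mul_sum, mul_assoc]

lemma formMul_smul_right (t : k) (f : Fin (a + 1) → k) (g : Fin (b + 1) → k) :
    formMul f (t • g) = t • formMul f g := by
  ext i
  simp [formMul, Finset.mul_sum, mul_left_comm]

lemma contract_smul (w : Fin (a + b + 1) → k) (t : k) (f : Fin (a + 1) → k) :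
    contract w (t • f) = t • contract w f := by
  ext j
  simp [contract, Finset.mul_sum, mul_assoc]

lemma contract_zero_left (f : Fin (a + 1) → k) : contract (0 : Fin (a + b + 1) → k) f = 0 := by
  ext j
  simp [contract]

lemma contract_formMul_self_smul (w : Fin (1 + 1 + b + 1) → k) (t : k) (l : Fin 2 → k) :
    contract w (formMul (t • l) (t • l)) = (t * t) • contract w (formMul l l) := by
  rw [formMul_smul_left, formMul_smul_right, smul_smul, contract_smul]

lemma formMul_self_fin_two (l : Fin 2 → k) : formMul l l = ![l 0 ^ 2, 2 * l 0 * l 1, l 1 ^ 2] := by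
  ext i
  fin_cases i <;> simp [formMul, Fintype.sum_prod_type, Fin.sum_univ_two] <;> ring

end Forms

section Quintic

variable {K : Type*} [Field K]

lemma mul_sub_mul_ne_zero_of_linearIndependent {u v : Fin 2 → K}
    (h : LinearIndependent K ![u, v]) :
    u 0 * v 1 - u 1 * v 0 ≠ 0 := by
  have hA : IsUnit (Matrix.of ![u, v]) := Matrix.linearIndependent_rows_iff_isUnit.mp h
  simpa [Matrix.isUnit_iff_isUnit_det, Matrix.det_fin_two] using hA

theorem eq_zero_of_contract_sq_eq_zero (w : Fin 6 → K) {l l' : Fin 2 → K}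
    (h : contract w (formMul l l) = (0 : Fin 4 → K))
    (h' : contract w (formMul l' l') = (0 : Fin 4 → K))
    (hD : l 0 * l' 1 - l 1 * l' 0 ≠ 0) : w = 0 := by
  simp only [formMul_self_fin_two, contract, funext_iff, Fin.forall_fin_succ, Fin.sum_univ_three,
    Fin.val_succ, Fin.val_eq_zero, Fin.coe_ofNat_eq_mod, Fin.reduceFinMk, cons_val_zero,
    cons_val_one, Matrix.cons_val, Nat.reduceAdd, Nat.zero_mod, Nat.one_mod, Nat.mod_succ,
    Pi.zero_apply, forall_const] at h h'
  obtain ⟨e0, e1, e2, e3⟩ := h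
  obtain ⟨f0, f1, f2, f3⟩ := h'
  set a := l 0; set b := l 1; set c := l' 0; set d := l' 1
  have cancel : ∀ x : K, (a * d - b * c) * x = 0 → x = 0 :=
    fun x hx => (mul_eq_zero.mp hx).resolve_left hD
  -- the mixed products `l * l'` are apolar to `w` as well
  have g0 : a * c * w 0 + (a * d + b * c) * w 1 + b * d * w 2 = 0 :=
    cancel _ (by linear_combination d * c * e0 + d ^ 2 * e1 - b * a * f0 - b ^ 2 * f1)
  have g1 : a * c * w 1 + (a * d + b * c) * w 2 + b * d * w 3 = 0 :=
    cancel _ (by linear_combination d * c * e1 + d ^ 2 * e2 - b * a * f1 - b ^ 2 * f2)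
  have g2 : a * c * w 2 + (a * d + b * c) * w 3 + b * d * w 4 = 0 :=
    cancel _ (by linear_combination d * c * e2 + d ^ 2 * e3 - b * a * f2 - b ^ 2 * f3)
  have g3 : a * c * w 3 + (a * d + b * c) * w 4 + b * d * w 5 = 0 :=
    cancel _ (by linear_combination a ^ 2 * f2 + a * b * f3 - c ^ 2 * e2 - c * d * e3)
  have w0 : w 0 = 0 := cancel _ <| cancel _ <| by
    linear_combination d ^ 2 * e0 + b ^ 2 * f0 - 2 * b * d * g0
  have w1 : w 1 = 0 := cancel _ <| cancel _ <| by
    linear_combination d ^ 2 * e1 + b ^ 2 * f1 - 2 * b * d * g1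
  have w2 : w 2 = 0 := cancel _ <| cancel _ <| by
    linear_combination d ^ 2 * e2 + b ^ 2 * f2 - 2 * b * d * g2
  have w3 : w 3 = 0 := cancel _ <| cancel _ <| by
    linear_combination d ^ 2 * e3 + b ^ 2 * f3 - 2 * b * d * g3
  have w4 : w 4 = 0 := cancel _ <| cancel _ <| by
    linear_combination c ^ 2 * e2 + a ^ 2 * f2 - 2 * a * c * g2
  have w5 : w 5 = 0 := cancel _ <| cancel _ <| by
    linear_combination c ^ 2 * e3 + a ^ 2 * f3 - 2 * a * c * g3
  ext i
  fin_cases i <;> assumption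

end Quintic

namespace Projectivization

open scoped LinearAlgebra.Projectivization

variable {K V : Type*} [Field K] [AddCommGroup V] [Module K V]

noncomputable def equivSubtypeRepMem (W : Submodule K V) : ℙ K W ≃ {x : ℙ K V // x.rep ∈ W} :=
  (Equiv.ofInjective _ (map_injective W.subtype W.injective_subtype)).trans <|
    Equiv.subtypeEquivRight fun x => by
      constructor
      · rintro ⟨y, rfl⟩
        induction y using ind with
        | h v hv =>
          obtain ⟨t, ht⟩ := exists_smul_eq_mk_rep K (W.subtype v) (by simpa using hv)
          rw [map_mk, ← ht]
          exact W.smul_of_tower_mem t v.2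
      · intro hx
        refine ⟨mk K ⟨x.rep, hx⟩ fun h => x.rep_nonzero (congrArg Subtype.val h), ?_⟩
        rw [map_mk]
        exact mk_rep x

open scoped Classical in
theorem card_subtype_apply_rep_eq_zero [Finite K] {n : ℕ} (hV : Module.finrank K V = n + 1)
    (f : Module.Dual K V) :
    Nat.card {x : ℙ K V // f x.rep = 0} =
      ∑ i ∈ Finset.range n, Nat.card K ^ i + if f = 0 then Nat.card K ^ n else 0 := by
  have : FiniteDimensional K V := Module.finite_of_finrank_eq_succ hV
  rw [← Nat.card_congr ((equivSubtypeRepMem (LinearMap.ker f)).trans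
    (Equiv.subtypeEquivRight fun x => LinearMap.mem_ker))]
  split_ifs with hf
  · subst hf
    rw [card_of_finrank K _ (by rw [LinearMap.ker_zero, finrank_top, hV]), Finset.sum_range_succ]
  · have := Module.Dual.finrank_ker_add_one_of_ne_zero hf
    rw [card_of_finrank K _ (n := n) (by omega), add_zero]

end Projectivization

section Count

open Projectivization
open scoped LinearAlgebra.Projectivization

variable {K : Type*} [Field K]

lemma contract_formMul_mk_rep_eq_zero_iff (w : Fin 6 → K) {l : Fin 2 → K} (hl : l ≠ 0) :
    contract w (formMul (mk K l hl).rep (mk K l hl).rep) = (0 : Fin 4 → K) ↔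
      contract w (formMul l l) = (0 : Fin 4 → K) := by
  obtain ⟨t, ht⟩ := exists_smul_eq_mk_rep K l hl
  rw [← ht, Units.smul_def, contract_formMul_self_smul, smul_eq_zero]
  simp

lemma pair_formMul_sq (w : Fin 6 → K) (l : Fin 2 → K) (c : Fin 4 → K) :
    pair w (formMul (formMul l l) c) = contract w (formMul l l) ⬝ᵥ c :=
  pair_formMul (b := 3) w _ c

theorem exists_mk_pair_formMul_iff (w : Fin 6 → K) (x₁ : ℙ K (Fin 2 → K))
    (x₂ : ℙ K (Fin 4 → K)) :
    (∃ (l : Fin 2 → K) (c : Fin 4 → K) (hl : l ≠ 0) (hc : c ≠ 0),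
        mk K l hl = x₁ ∧ mk K c hc = x₂ ∧ pair w (formMul (formMul l l) c) = 0) ↔
      contract w (formMul x₁.rep x₁.rep) ⬝ᵥ x₂.rep = 0 := by
  constructor
  · rintro ⟨l, c, hl, hc, rfl, rfl, h⟩
    obtain ⟨s, hs⟩ := exists_smul_eq_mk_rep K l hl
    obtain ⟨t, ht⟩ := exists_smul_eq_mk_rep K c hc
    rw [pair_formMul_sq] at h
    rw [← hs, ← ht, Units.smul_def, Units.smul_def, contract_formMul_self_smul, smul_dotProduct,
      dotProduct_smul, h, smul_zero, smul_zero]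
  · intro h
    refine ⟨_, _, rep_nonzero _, rep_nonzero _, mk_rep _, mk_rep _, ?_⟩
    rwa [pair_formMul_sq]

open scoped Classical in
lemma card_subtype_dotProduct_rep_eq_zero [Finite K] (u : Fin 4 → K) :
    Nat.card {x : ℙ K (Fin 4 → K) // u ⬝ᵥ x.rep = 0} =
      1 + Nat.card K + Nat.card K ^ 2 + if u = 0 then Nat.card K ^ 3 else 0 := by
  have h := card_subtype_apply_rep_eq_zero (Module.finrank_fin_fun K (n := 4))
    (dotProductEquiv K (Fin 4) u)
  simp only [dotProductEquiv_apply_apply, LinearEquiv.map_eq_zero_iff] at h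
  rw [h, Finset.sum_range_succ, Finset.sum_range_succ, Finset.sum_range_one]
  ring

theorem card_apolar_pairs [Finite K] (w : Fin 6 → K) :
    Nat.card {x : ℙ K (Fin 2 → K) × ℙ K (Fin 4 → K) //
      ∃ (l : Fin 2 → K) (c : Fin 4 → K) (hl : l ≠ 0) (hc : c ≠ 0),
        mk K l hl = x.1 ∧ mk K c hc = x.2 ∧ pair w (formMul (formMul l l) c) = 0} =
      (Nat.card K + 1) * (Nat.card K ^ 2 + Nat.card K + 1) +
        Nat.card K ^ 3 *
          Nat.card {x : ℙ K (Fin 2 → K) // contract w (formMul x.rep x.rep) = (0 : Fin 4 → K)} := by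
  classical
  have : Fintype (ℙ K (Fin 2 → K)) := Fintype.ofFinite _
  calc _ = Nat.card {x : ℙ K (Fin 2 → K) × ℙ K (Fin 4 → K) //
          contract w (formMul x.1.rep x.1.rep) ⬝ᵥ x.2.rep = 0} :=
        Nat.card_congr <| Equiv.subtypeEquivRight fun x => by
          exact exists_mk_pair_formMul_iff w x.1 x.2
    _ = Nat.card (Σ x₁ : ℙ K (Fin 2 → K),
          {x₂ : ℙ K (Fin 4 → K) // contract w (formMul x₁.rep x₁.rep) ⬝ᵥ x₂.rep = 0}) :=
        Nat.card_congr <| Equiv.subtypeProdEquivSigmaSubtype (α := ℙ K (Fin 2 → K))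
          (β := ℙ K (Fin 4 → K)) fun x₁ x₂ => contract w (formMul x₁.rep x₁.rep) ⬝ᵥ x₂.rep = 0
    _ = ∑ x₁ : ℙ K (Fin 2 → K), (1 + Nat.card K + Nat.card K ^ 2 +
          if contract w (formMul x₁.rep x₁.rep) = (0 : Fin 4 → K) then Nat.card K ^ 3 else 0) := by
        rw [Nat.card_sigma]
        exact Finset.sum_congr rfl fun x₁ _ => card_subtype_dotProduct_rep_eq_zero _
    _ = _ := by
        rw [Finset.sum_add_distrib, Finset.sum_const, Finset.card_univ, ← Nat.card_eq_fintype_card,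
          card_of_finrank_two K _ (Module.finrank_fin_fun K), Finset.sum_ite, Finset.sum_const,
          Finset.sum_const_zero, ← Fintype.card_subtype, ← Nat.card_eq_fintype_card]
        simp only [smul_eq_mul]
        ring

theorem eq_of_contract_sq_rep_eq_zero {w : Fin 6 → K} (hw : w ≠ 0) {x y : ℙ K (Fin 2 → K)}
    (hx : contract w (formMul x.rep x.rep) = (0 : Fin 4 → K))
    (hy : contract w (formMul y.rep y.rep) = (0 : Fin 4 → K)) : x = y := by
  by_contra hxy
  exact hw <| eq_zero_of_contract_sq_eq_zero w hx hy <|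
    mul_sub_mul_ne_zero_of_linearIndependent (linearIndependent_pair_iff_ne.mpr hxy)

theorem card_apolar_points [Fintype K] [DecidableEq K] (w : Fin 6 → K) :
    Nat.card {x : ℙ K (Fin 2 → K) // contract w (formMul x.rep x.rep) = (0 : Fin 4 → K)} =
      if w = 0 then Nat.card K + 1
      else if ∃ l : Fin 2 → K, l ≠ 0 ∧ ∀ h : Fin 4 → K, pair w (formMul (formMul l l) h) = 0
        then 1
      else 0 := by
  simp only [pair_formMul_sq, dotProduct_eq_zero_iff]
  split_ifs with hw hex
  · subst hw
    simp only [contract_zero_left]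
    rw [Nat.card_congr (Equiv.subtypeUnivEquiv fun _ => trivial),
      card_of_finrank_two K _ (Module.finrank_fin_fun K)]
  · obtain ⟨l, hl, hll⟩ := hex
    rw [Nat.card_eq_one_iff_exists]
    refine ⟨⟨mk K l hl, (contract_formMul_mk_rep_eq_zero_iff w hl).mpr hll⟩, fun y => ?_⟩
    exact Subtype.ext <|
      eq_of_contract_sq_rep_eq_zero hw y.2 ((contract_formMul_mk_rep_eq_zero_iff w hl).mpr hll)
  · rw [Nat.card_eq_zero]
    exact Or.inl ⟨fun x => hex ⟨x.1.rep, x.1.rep_nonzero, x.2⟩⟩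

end Count

open scoped Classical in
/-- Fiber count for the morphism `ψ_{1²,3}` over `[w^⊥]₅`. -/
theorem stmt8 (p : ℕ) [Fact p.Prime] (w : Fin 6 → ZMod p) :
    Nat.card {x : Projectivization (ZMod p) (Fin 2 → ZMod p) ×
        Projectivization (ZMod p) (Fin 4 → ZMod p) //
      ∃ (l : Fin 2 → ZMod p) (c : Fin 4 → ZMod p) (hl : l ≠ 0) (hc : c ≠ 0),
        Projectivization.mk (ZMod p) l hl = x.1 ∧
        Projectivization.mk (ZMod p) c hc = x.2 ∧
        pair w (formMul (formMul l l) c) = 0} =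
    (p + 1) * (p ^ 2 + p + 1) + p ^ 3 *
      (if w = 0 then p + 1
       else if ∃ l : Fin 2 → ZMod p, l ≠ 0 ∧
           ∀ h : Fin 4 → ZMod p, pair w (formMul (formMul l l) h) = 0
         then 1 else 0) := by
  have h := card_apolar_pairs w
  rw [card_apolar_points, Nat.card_zmod] at h
  exact h
end

section
/- Let p be a prime. The number of elements v ∈ V_5^* (binary quintic forms over 𝔽_p, identified with 𝔽_p^6) that are either zero or singular equals p⁵ + p⁴ − p³. Equivalently, S(0) = p⁵ + p⁴ − p³, i.e., Φ̂(0) = p^{−1} + p^{−2} − p^{−3}. -/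
open Finset

/-- A binary quintic form is singular if it is nonzero and, over an algebraic closure,
it is divisible by the square of a nonzero linear form. -/
def IsSingularQuintic {k : Type*} [Field k] (v : Fin 6 → k) : Prop :=
  v ≠ 0 ∧ ∃ (l : Fin 2 → AlgebraicClosure k) (c : Fin 4 → AlgebraicClosure k),
    l ≠ 0 ∧
    (fun i => algebraMap k (AlgebraicClosure k) (v i)) = formMul (formMul l l) c

open scoped Classical in
/-- The exponential sum `S(w)` over binary quintic forms that are zero or singular. -/
noncomputable def expSum (p : ℕ) [Fact p.Prime] (w : Fin 6 → ZMod p) : ℂ :=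
  ∑ v : Fin 6 → ZMod p,
    if v = 0 ∨ IsSingularQuintic v then
      Complex.exp (2 * Real.pi * Complex.I * ((pair w v).val : ℂ) / (p : ℂ))
    else 0

set_option linter.unusedSectionVars false
set_option maxHeartbeats 1000000

section Hidden
open Polynomial


namespace Aux
variable {k : Type*} [CommRing k]

noncomputable def tp {m : ℕ} (v : Fin m → k) : k[X] :=
  ∑ i : Fin m, C (v i) * X ^ (i : ℕ)

lemma coeff_tp {m : ℕ} (v : Fin m → k) (j : ℕ) :
    (tp v).coeff j = if h : j < m then v ⟨j, h⟩ else 0 := by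
  rw [tp, finset_sum_coeff]
  simp only [coeff_C_mul, coeff_X_pow, mul_ite, mul_one, mul_zero]
  split
  · next h =>
    rw [Finset.sum_eq_single (⟨j, h⟩ : Fin m)]
    · simp
    · intro b _ hb
      simp only [ite_eq_right_iff]
      intro hbj
      exact absurd (Fin.ext hbj.symm : b = ⟨j, h⟩) hb
    · simp
  · next h =>
    apply Finset.sum_eq_zero
    intro b _
    simp only [ite_eq_right_iff]
    intro hbj
    exact absurd (hbj ▸ b.isLt) h

/-- monic polynomial with given lower coefficients -/
noncomputable def mpoly (d : ℕ) (t : Fin d → k) : k[X] := X ^ d + tp t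

lemma coeff_mpoly_lt {d : ℕ} (t : Fin d → k) {j : ℕ} (h : j < d) :
    (mpoly d t).coeff j = t ⟨j, h⟩ := by
  rw [mpoly, coeff_add, coeff_X_pow, if_neg (by omega), coeff_tp, dif_pos h, zero_add]

lemma coeff_mpoly_self {d : ℕ} (t : Fin d → k) : (mpoly d t).coeff d = 1 := by
  rw [mpoly, coeff_add, coeff_X_pow, if_pos rfl, coeff_tp, dif_neg (by omega), add_zero]

lemma coeff_mpoly_gt {d : ℕ} (t : Fin d → k) {j : ℕ} (h : d < j) :
    (mpoly d t).coeff j = 0 := by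
  rw [mpoly, coeff_add, coeff_X_pow, if_neg (by omega), coeff_tp, dif_neg (by omega), add_zero]

lemma mpoly_monic [Nontrivial k] {d : ℕ} (t : Fin d → k) : (mpoly d t).Monic := by
  apply monic_of_natDegree_le_of_coeff_eq_one d
  · exact natDegree_le_iff_coeff_eq_zero.mpr fun N hN => coeff_mpoly_gt t hN
  · exact coeff_mpoly_self t

lemma mpoly_natDegree [Nontrivial k] {d : ℕ} (t : Fin d → k) : (mpoly d t).natDegree = d :=
  le_antisymm (natDegree_le_iff_coeff_eq_zero.mpr fun N hN => coeff_mpoly_gt t hN)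
    (le_natDegree_of_ne_zero (by rw [coeff_mpoly_self]; exact one_ne_zero))

variable (k) in
/-- monic polynomials of degree `d` -/
def Monics (d : ℕ) : Type _ := {f : k[X] // f.Monic ∧ f.natDegree = d}

variable (k) in
/-- monic squarefree polynomials of degree `d` -/
def MSF (d : ℕ) : Type _ := {f : Monics k d // Squarefree f.val}

noncomputable def monicsEquiv [Nontrivial k] (d : ℕ) : (Fin d → k) ≃ Monics k d where
  toFun t := ⟨mpoly d t, mpoly_monic t, mpoly_natDegree t⟩
  invFun f i := f.1.coeff (i : ℕ)
  left_inv t := by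
    funext i
    exact coeff_mpoly_lt t i.isLt
  right_inv f := by
    apply Subtype.ext
    ext j
    rcases lt_trichotomy j d with h | rfl | h
    · rw [coeff_mpoly_lt _ h]
    · rw [coeff_mpoly_self]
      have := f.2.1.coeff_natDegree
      rw [f.2.2] at this
      exact this.symm
    · rw [coeff_mpoly_gt _ h]
      refine (coeff_eq_zero_of_natDegree_lt ?_).symm
      rw [f.2.2]
      exact h

end Aux

namespace Aux
section FieldPart
variable {F : Type*} [Field F]

lemma decomp_exists : ∀ (n : ℕ) (f : F[X]), f.Monic → f.natDegree = n →
    ∃ s g : F[X], s.Monic ∧ Squarefree s ∧ g.Monic ∧ f = s * g ^ 2 := by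
  intro n
  induction n using Nat.strong_induction_on with
  | _ n ih =>
    intro f hf hdeg
    by_cases hsf : Squarefree f
    · exact ⟨f, 1, hf, hsf, monic_one, by ring⟩
    · rw [Squarefree] at hsf
      push_neg at hsf
      obtain ⟨x, hxd, hxu⟩ := hsf
      have hx0 : x ≠ 0 := by
        rintro rfl
        rw [mul_zero, zero_dvd_iff] at hxd
        exact hf.ne_zero hxd
      set y := x * C x.leadingCoeff⁻¹ with hy_def
      have hy : y.Monic := monic_mul_leadingCoeff_inv hx0
      have hyx : y ∣ x := ⟨C x.leadingCoeff, by
        rw [hy_def, mul_assoc, ← C_mul, inv_mul_cancel₀ (leadingCoeff_ne_zero.mpr hx0), C_1,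
          mul_one]⟩
      have hyyf : y * y ∣ f := dvd_trans (mul_dvd_mul hyx hyx) hxd
      obtain ⟨h, hfh⟩ := hyyf
      have hh : h.Monic := (hy.mul hy).of_mul_monic_left (hfh ▸ hf)
      have hyu : ¬ IsUnit y := by
        intro hu
        exact hxu (isUnit_of_mul_isUnit_left (hy_def ▸ hu))
      have hydeg : 1 ≤ y.natDegree := by
        rcases Nat.eq_zero_or_pos y.natDegree with h0 | h1
        · exact absurd (eq_one_of_monic_natDegree_zero hy h0 ▸ isUnit_one) hyu
        · exact h1
      have hdegh : h.natDegree < n := by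
        have : f.natDegree = y.natDegree + y.natDegree + h.natDegree := by
          rw [hfh, (hy.mul hy).natDegree_mul hh, hy.natDegree_mul hy]
        omega
      obtain ⟨s, g, hs, hssf, hg, hhsg⟩ := ih h.natDegree hdegh h hh rfl
      exact ⟨s, y * g, hs, hssf, hy.mul hg, by rw [hfh, hhsg]; ring⟩

variable [NormalizationMonoid F]

lemma decomp_unique {s₁ s₂ g₁ g₂ : F[X]} (hs₁ : s₁.Monic) (hs₂ : s₂.Monic)
    (hg₁ : g₁.Monic) (hg₂ : g₂.Monic) (sf₁ : Squarefree s₁) (sf₂ : Squarefree s₂)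
    (h : s₁ * g₁ ^ 2 = s₂ * g₂ ^ 2) : s₁ = s₂ ∧ g₁ = g₂ := by
  classical
  have hs₁0 := hs₁.ne_zero
  have hs₂0 := hs₂.ne_zero
  have hg₁0 := hg₁.ne_zero
  have hg₂0 := hg₂.ne_zero
  have hfac : UniqueFactorizationMonoid.normalizedFactors s₁
        + 2 • UniqueFactorizationMonoid.normalizedFactors g₁
      = UniqueFactorizationMonoid.normalizedFactors s₂
        + 2 • UniqueFactorizationMonoid.normalizedFactors g₂ := by
    have h1 := congrArg UniqueFactorizationMonoid.normalizedFactors h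
    rwa [UniqueFactorizationMonoid.normalizedFactors_mul hs₁0 (pow_ne_zero 2 hg₁0),
      UniqueFactorizationMonoid.normalizedFactors_mul hs₂0 (pow_ne_zero 2 hg₂0),
      UniqueFactorizationMonoid.normalizedFactors_pow,
      UniqueFactorizationMonoid.normalizedFactors_pow] at h1
  have hnd₁ := (UniqueFactorizationMonoid.squarefree_iff_nodup_normalizedFactors hs₁0).mp sf₁
  have hnd₂ := (UniqueFactorizationMonoid.squarefree_iff_nodup_normalizedFactors hs₂0).mp sf₂
  have hcount : ∀ a : F[X],
      (UniqueFactorizationMonoid.normalizedFactors s₁).count a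
        = (UniqueFactorizationMonoid.normalizedFactors s₂).count a
      ∧ (UniqueFactorizationMonoid.normalizedFactors g₁).count a
        = (UniqueFactorizationMonoid.normalizedFactors g₂).count a := by
    intro a
    have hc := congrArg (Multiset.count a) hfac
    rw [Multiset.count_add, Multiset.count_add, Multiset.count_nsmul,
      Multiset.count_nsmul] at hc
    have h1 := Multiset.nodup_iff_count_le_one.mp hnd₁ a
    have h2 := Multiset.nodup_iff_count_le_one.mp hnd₂ a
    omega
  have hseq : UniqueFactorizationMonoid.normalizedFactors s₁
      = UniqueFactorizationMonoid.normalizedFactors s₂ :=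
    Multiset.ext.mpr fun a => (hcount a).1
  have hgeq : UniqueFactorizationMonoid.normalizedFactors g₁
      = UniqueFactorizationMonoid.normalizedFactors g₂ :=
    Multiset.ext.mpr fun a => (hcount a).2
  constructor
  · exact eq_of_monic_of_associated hs₁ hs₂
      ((UniqueFactorizationMonoid.associated_iff_normalizedFactors_eq_normalizedFactors
        hs₁0 hs₂0).mpr hseq)
  · exact eq_of_monic_of_associated hg₁ hg₂
      ((UniqueFactorizationMonoid.associated_iff_normalizedFactors_eq_normalizedFactors
        hg₁0 hg₂0).mpr hgeq)

end FieldPart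
end Aux

namespace Aux
section Count
variable {F : Type*} [Field F] [NormalizationMonoid F] [Fintype F]

instance (d : ℕ) : Finite (Monics F d) := Finite.of_equiv _ (monicsEquiv d)
instance (d : ℕ) : Finite (MSF F d) := by unfold MSF; infer_instance

lemma card_monics (d : ℕ) : Nat.card (Monics F d) = Fintype.card F ^ d := by
  rw [← Nat.card_congr (monicsEquiv (k := F) d)]
  simp [Nat.card_eq_fintype_card]

lemma card_decomp (n m : ℕ) (hm : n / 2 + 1 = m) :
    Fintype.card F ^ n = ∑ j : Fin m, Nat.card (MSF F (n - 2 * (j : ℕ)))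
      * Fintype.card F ^ (j : ℕ) := by
  subst hm
  have hbij : Function.Bijective
      (fun x : Σ j : Fin (n / 2 + 1), MSF F (n - 2 * (j : ℕ)) × Monics F (j : ℕ) =>
        (⟨x.2.1.1.1 * x.2.2.1 ^ 2,
          (x.2.1.1.2.1.mul (x.2.2.2.1.pow 2)),
          by
            rw [(x.2.1.1.2.1).natDegree_mul (x.2.2.2.1.pow 2), x.2.1.1.2.2,
              x.2.2.2.1.natDegree_pow, x.2.2.2.2]
            have := x.1.isLt
            omega⟩ : Monics F n)) := by
    constructor
    · rintro ⟨j₁, s₁, g₁⟩ ⟨j₂, s₂, g₂⟩ hEq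
      have hpoly : s₁.1.1 * g₁.1 ^ 2 = s₂.1.1 * g₂.1 ^ 2 := congrArg Subtype.val hEq
      obtain ⟨hs, hg⟩ := decomp_unique s₁.1.2.1 s₂.1.2.1 g₁.2.1 g₂.2.1 s₁.2 s₂.2 hpoly
      have hj : j₁ = j₂ := by
        apply Fin.ext
        rw [← g₁.2.2, ← g₂.2.2, hg]
      subst hj
      have hs' : s₁ = s₂ := Subtype.ext (Subtype.ext hs)
      have hg' : g₁ = g₂ := Subtype.ext hg
      rw [hs', hg']
    · rintro ⟨f, hf, hdeg⟩
      obtain ⟨s, g, hs, hssf, hg, hfsg⟩ := decomp_exists f.natDegree f hf rfl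
      have hdegs : f.natDegree = s.natDegree + 2 * g.natDegree := by
        rw [hfsg, hs.natDegree_mul (hg.pow 2), hg.natDegree_pow]
      have hjlt : g.natDegree < n / 2 + 1 := by omega
      refine ⟨⟨⟨g.natDegree, hjlt⟩, ⟨⟨s, hs, ?_⟩, hssf⟩, ⟨g, hg, rfl⟩⟩, ?_⟩
      · simp only []
        omega
      · apply Subtype.ext
        exact hfsg.symm
  classical
  have hcc : Nat.card (Σ j : Fin (n / 2 + 1), MSF F (n - 2 * (j : ℕ)) × Monics F (j : ℕ))
      = Nat.card (Monics F n) := Nat.card_congr (Equiv.ofBijective _ hbij)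
  rw [card_monics n] at hcc
  rw [← hcc]
  letI : ∀ j : Fin (n / 2 + 1), Fintype (MSF F (n - 2 * (j : ℕ)) × Monics F (j : ℕ)) :=
    fun j => Fintype.ofFinite _
  rw [Nat.card_eq_fintype_card, Fintype.card_sigma]
  apply Finset.sum_congr rfl
  intro j _
  rw [← Nat.card_eq_fintype_card, Nat.card_prod, card_monics]

lemma card_msf_zero : Nat.card (MSF F 0) = 1 := by
  rw [Nat.card_eq_one_iff_unique]
  constructor
  · constructor
    rintro ⟨⟨f, hf, hd⟩, -⟩ ⟨⟨g, hg, hgd⟩, -⟩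
    apply Subtype.ext; apply Subtype.ext
    simp only
    rw [eq_one_of_monic_natDegree_zero hf hd, eq_one_of_monic_natDegree_zero hg hgd]
  · exact ⟨⟨⟨1, monic_one, natDegree_one⟩, squarefree_one⟩⟩

lemma card_msf_one : Nat.card (MSF F 1) = Fintype.card F := by
  have e : MSF F 1 ≃ Monics F 1 := Equiv.subtypeUnivEquiv (fun f =>
    (irreducible_of_degree_eq_one
      (by rw [degree_eq_natDegree f.2.1.ne_zero, f.2.2]; rfl)).squarefree)
  rw [Nat.card_congr e, card_monics, pow_one]

end Count
end Aux

namespace Aux2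
open Aux
variable {F : Type*} [Field F] [NormalizationMonoid F] [Fintype F]

lemma msf_45 :
    (Nat.card (MSF F 4) : ℤ) + Nat.card (MSF F 5)
      = (Fintype.card F : ℤ) ^ 5 - (Fintype.card F : ℤ) ^ 3 := by
  have e2 := card_decomp (F := F) 2 2 (by norm_num)
  have e3 := card_decomp (F := F) 3 2 (by norm_num)
  have e4 := card_decomp (F := F) 4 3 (by norm_num)
  have e5 := card_decomp (F := F) 5 3 (by norm_num)
  rw [Fin.sum_univ_two] at e2 e3
  rw [Fin.sum_univ_three] at e4 e5
  norm_num [card_msf_zero, card_msf_one] at e2 e3 e4 e5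
  have i2 := congrArg (Nat.cast : ℕ → ℤ) e2
  have i3 := congrArg (Nat.cast : ℕ → ℤ) e3
  have i4 := congrArg (Nat.cast : ℕ → ℤ) e4
  have i5 := congrArg (Nat.cast : ℕ → ℤ) e5
  push_cast at i2 i3 i4 i5
  nlinarith [i2, i3, i4, i5]

end Aux2

namespace Aux3
open Aux
variable {F : Type*} [Field F] [Fintype F] [DecidableEq F]

lemma tp_coeff_eq {m : ℕ} (P : F[X]) (h : P.natDegree < m) :
    tp (fun i : Fin m => P.coeff (i : ℕ)) = P := by
  ext j
  rw [coeff_tp]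
  split
  · rfl
  · next hj => exact (coeff_eq_zero_of_natDegree_lt (by omega)).symm

noncomputable def sfdeg_equiv (d : ℕ) (hd : d ≤ 5) :
    (Fˣ × MSF F d) ≃ {v : Fin 6 → F // Squarefree (tp v) ∧ (tp v).natDegree = d} := by
  apply Equiv.ofBijective (fun x : Fˣ × MSF F d =>
    (⟨fun i : Fin 6 => (C (x.1 : F) * x.2.1.1).coeff (i : ℕ), by
      have hdeg : (C (x.1 : F) * x.2.1.1).natDegree = d := by
        rw [natDegree_C_mul_eq_of_mul_eq_one (Units.inv_mul x.1), x.2.1.2.2]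
      have htp : tp (fun i : Fin 6 => (C (x.1 : F) * x.2.1.1).coeff (i : ℕ))
          = C (x.1 : F) * x.2.1.1 := tp_coeff_eq _ (by omega)
      rw [htp]
      refine ⟨?_, hdeg⟩
      have hdvd : C (x.1 : F) * x.2.1.1 ∣ x.2.1.1 :=
        ⟨C ((x.1⁻¹ : Fˣ) : F), by
          rw [mul_comm (C (x.1 : F)) x.2.1.1, mul_assoc, ← C_mul, Units.mul_inv, C_1, mul_one]⟩
      exact Squarefree.squarefree_of_dvd hdvd x.2.2⟩ :
      {v : Fin 6 → F // Squarefree (tp v) ∧ (tp v).natDegree = d}))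
  constructor
  · rintro ⟨u₁, f₁⟩ ⟨u₂, f₂⟩ hEq
    have htup := congrArg Subtype.val hEq
    have hpoly : C (u₁ : F) * f₁.1.1 = C (u₂ : F) * f₂.1.1 := by
      have h1 := tp_coeff_eq (m := 6) (C (u₁ : F) * f₁.1.1) (by
        rw [natDegree_C_mul_eq_of_mul_eq_one (Units.inv_mul u₁), f₁.1.2.2]
        omega)
      have h2 := tp_coeff_eq (m := 6) (C (u₂ : F) * f₂.1.1) (by
        rw [natDegree_C_mul_eq_of_mul_eq_one (Units.inv_mul u₂), f₂.1.2.2]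
        omega)
      rw [← h1, ← h2]
      exact congrArg tp htup
    have hu : u₁ = u₂ := by
      have := congrArg (fun P => P.coeff (f₁.1.1.natDegree)) hpoly
      simp only [coeff_C_mul] at this
      have hd2 : f₁.1.1.natDegree = f₂.1.1.natDegree := by rw [f₁.1.2.2, f₂.1.2.2]
      rw [f₁.1.2.1.coeff_natDegree, hd2, f₂.1.2.1.coeff_natDegree, mul_one, mul_one] at this
      exact Units.ext this
    subst hu
    have hf : f₁ = f₂ := by
      apply Subtype.ext; apply Subtype.ext
      have := mul_left_cancel₀ (a := C (u₁ : F)) (by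
        simpa using (C_eq_zero (a := (u₁ : F))).not.mpr u₁.ne_zero) hpoly
      exact this
    rw [hf]
  · rintro ⟨v, hsf, hdeg⟩
    set P := tp v with hP
    have hP0 : P ≠ 0 := hsf.ne_zero
    have hlc : P.leadingCoeff ≠ 0 := leadingCoeff_ne_zero.mpr hP0
    refine ⟨⟨Units.mk0 P.leadingCoeff hlc, ⟨⟨P * C P.leadingCoeff⁻¹,
      monic_mul_leadingCoeff_inv hP0, ?_⟩, ?_⟩⟩, ?_⟩
    · rw [natDegree_mul_C_eq_of_mul_ne_zero, hdeg]
      · exact mul_ne_zero hlc (inv_ne_zero hlc)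
    · have hdvd : P * C P.leadingCoeff⁻¹ ∣ P :=
        ⟨C P.leadingCoeff, by rw [mul_assoc, ← C_mul, inv_mul_cancel₀ hlc, C_1, mul_one]⟩
      exact Squarefree.squarefree_of_dvd hdvd hsf
    · apply Subtype.ext
      simp only [Units.val_mk0]
      have hPP : C P.leadingCoeff * (P * C P.leadingCoeff⁻¹) = P := by
        rw [mul_comm P, ← mul_assoc, ← C_mul, mul_inv_cancel₀ hlc, C_1, one_mul]
      rw [hPP]
      funext i
      rw [hP, coeff_tp, dif_pos i.isLt]

end Aux3

namespace Aux
variable {k : Type*} [CommRing k]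

noncomputable def toPoly {n : ℕ} (v : Fin (n + 1) → k) : k[X] := tp v

variable {K : Type*} [CommRing K]

lemma coeff_toPoly {n : ℕ} (v : Fin (n + 1) → k) (j : ℕ) :
    (toPoly v).coeff j = if h : j < n + 1 then v ⟨j, h⟩ else 0 := coeff_tp v j

lemma natDegree_toPoly_le {n : ℕ} (v : Fin (n + 1) → k) : (toPoly v).natDegree ≤ n := by
  apply natDegree_le_iff_coeff_eq_zero.mpr
  intro j hj
  rw [coeff_toPoly, dif_neg (by omega)]

lemma toPoly_inj {n : ℕ} {v w : Fin (n + 1) → k} (h : toPoly v = toPoly w) : v = w := by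
  funext i
  have := congrArg (fun P => Polynomial.coeff P (i : ℕ)) h
  simpa [coeff_toPoly, i.isLt] using this

lemma toPoly_coeff {n : ℕ} (P : k[X]) (h : P.natDegree ≤ n) :
    toPoly (fun i : Fin (n + 1) => P.coeff (i : ℕ)) = P := by
  ext j
  rw [coeff_toPoly]
  split
  · rfl
  · next hj => exact (coeff_eq_zero_of_natDegree_lt (by omega)).symm

lemma toPoly_eq_zero_iff {n : ℕ} {v : Fin (n + 1) → k} : toPoly v = 0 ↔ v = 0 := by
  constructor
  · intro h
    have h0 : toPoly v = toPoly (0 : Fin (n + 1) → k) := by simpa [toPoly, tp] using h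
    exact toPoly_inj h0
  · rintro rfl; simp [toPoly, tp]

lemma toPoly_formMul {a b : ℕ} (f : Fin (a + 1) → k) (g : Fin (b + 1) → k) :
    toPoly (formMul f g) = toPoly f * toPoly g := by
  simp only [toPoly, tp]
  rw [Finset.sum_mul_sum, ← Finset.sum_product']
  unfold formMul
  have : ∀ (i : Fin (a+b+1)),
      C (∑ q : Fin (a + 1) × Fin (b + 1),
        if (q.1 : ℕ) + (q.2 : ℕ) = (i : ℕ) then f q.1 * g q.2 else 0) * X ^ (i:ℕ)
      = ∑ q : Fin (a + 1) × Fin (b + 1),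
        if (q.1 : ℕ) + (q.2 : ℕ) = (i : ℕ) then C (f q.1) * C (g q.2) * X ^ (i:ℕ) else 0 := by
    intro i
    rw [map_sum, Finset.sum_mul]
    apply Finset.sum_congr rfl
    intro q _
    rw [apply_ite C, map_mul, map_zero, ite_mul, zero_mul]
  simp only [this]
  rw [Finset.sum_comm, Finset.univ_product_univ]
  apply Finset.sum_congr rfl
  intro q _
  have hlt : (q.1 : ℕ) + (q.2 : ℕ) < a + b + 1 := by omega
  rw [Finset.sum_eq_single (⟨(q.1:ℕ) + (q.2:ℕ), hlt⟩ : Fin (a + b + 1))]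
  · rw [if_pos rfl]; ring
  · intro i _ hi
    rw [if_neg]
    intro hc
    exact hi (Fin.ext hc.symm)
  · simp


lemma toPoly_map (φ : k →+* K) {n : ℕ} (v : Fin (n + 1) → k) :
    toPoly (fun i => φ (v i)) = (toPoly v).map φ := by
  simp only [toPoly, tp]
  rw [Polynomial.map_sum]
  simp

section Field
variable {F : Type*} [Field F] [PerfectField F]

local notation "Kbar" => AlgebraicClosure F

lemma singular_iff (v : Fin 6 → F) :
    (v = 0 ∨ IsSingularQuintic v) ↔
      ¬(Squarefree (toPoly v) ∧ 4 ≤ (toPoly v).natDegree) := by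
  set φ := algebraMap F Kbar
  have hφ : Function.Injective φ := (algebraMap F Kbar).injective
  constructor
  · rintro (rfl | ⟨hv, l, c, hl, heq⟩)
    · rintro ⟨hsf, -⟩
      rw [show toPoly (0 : Fin 6 → F) = 0 from toPoly_eq_zero_iff.mpr rfl] at hsf
      exact not_squarefree_zero hsf
    · rintro ⟨hsf, hdeg⟩
      have hPbar : (toPoly v).map φ = toPoly l * toPoly l * toPoly c := by
        rw [← toPoly_map φ v, heq, toPoly_formMul, toPoly_formMul]
      have hsfbar : Squarefree ((toPoly v).map φ) := by
        rw [← PerfectField.separable_iff_squarefree] at hsf ⊢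
        exact hsf.map
      have hL : toPoly l ≠ 0 := fun h => hl (toPoly_eq_zero_iff.mp h)
      have hdegL : (toPoly l).natDegree ≤ 1 := natDegree_toPoly_le l
      interval_cases h : (toPoly l).natDegree
      · -- L is a nonzero constant
        have hdd : ((toPoly v).map φ).natDegree ≤ 3 := by
          rw [hPbar]
          calc (toPoly l * toPoly l * toPoly c).natDegree
              ≤ (toPoly l * toPoly l).natDegree + (toPoly c).natDegree := natDegree_mul_le
            _ ≤ ((toPoly l).natDegree + (toPoly l).natDegree) + 3 :=
                add_le_add natDegree_mul_le (natDegree_toPoly_le c)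
            _ ≤ 3 := by omega
        rw [natDegree_map_eq_of_injective hφ] at hdd
        omega
      · -- L has degree 1, contradiction with squarefree
        have : IsUnit (toPoly l) := hsfbar (toPoly l) ⟨toPoly c, by rw [hPbar]⟩
        have := natDegree_eq_zero_of_isUnit this
        omega
  · intro hcond
    by_cases hv : v = 0
    · exact Or.inl hv
    right
    refine ⟨hv, ?_⟩
    have hP : toPoly v ≠ 0 := fun h => hv (toPoly_eq_zero_iff.mp h)
    by_cases hdeg : (toPoly v).natDegree ≤ 3
    · -- divisible by x^2 : use constant linear form
      refine ⟨![1, 0], fun i => ((toPoly v).map φ).coeff (i : ℕ), ?_, ?_⟩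
      · intro h
        have := congrFun h 0
        simp at this
      · apply toPoly_inj
        rw [toPoly_formMul, toPoly_formMul, toPoly_map]
        have h1 : toPoly (![1, 0] : Fin 2 → Kbar) = 1 := by
          simp only [toPoly, tp]
          rw [Fin.sum_univ_two]
          simp
        have h2 : toPoly (fun i : Fin 4 => ((toPoly v).map φ).coeff (i : ℕ))
            = (toPoly v).map φ := by
          apply toPoly_coeff
          rw [natDegree_map_eq_of_injective hφ]
          omega
        rw [h1, h2, one_mul, one_mul]
    · -- not squarefree
      have hnsf : ¬ Squarefree (toPoly v) := fun h => hcond ⟨h, by omega⟩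
      have hnsfbar : ¬ Squarefree ((toPoly v).map φ) := by
        rw [← PerfectField.separable_iff_squarefree] at hnsf ⊢
        rw [separable_map] at *
        exact hnsf
      rw [Squarefree] at hnsfbar
      push_neg at hnsfbar
      obtain ⟨x, hxd, hxu⟩ := hnsfbar
      have hPbar : (toPoly v).map φ ≠ 0 := by
        simpa using (Polynomial.map_ne_zero_iff hφ).mpr hP
      have hx0 : x ≠ 0 := by
        rintro rfl
        rw [mul_zero, zero_dvd_iff] at hxd
        exact hPbar hxd
      have hxdeg : 0 < x.degree := degree_pos_of_ne_zero_of_nonunit hx0 hxu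
      obtain ⟨r, hr⟩ := IsAlgClosed.exists_root x hxdeg.ne'
      have hdvd : (X - C r) * (X - C r) ∣ (toPoly v).map φ := by
        exact dvd_trans (mul_dvd_mul (dvd_iff_isRoot.mpr hr) (dvd_iff_isRoot.mpr hr)) hxd
      obtain ⟨D, hD⟩ := hdvd
      have hXr : (X - C r) ≠ 0 := X_sub_C_ne_zero r
      have hD0 : D ≠ 0 := by rintro rfl; rw [mul_zero] at hD; exact hPbar hD
      have hdegD : D.natDegree ≤ 3 := by
        have h5 : ((toPoly v).map φ).natDegree ≤ 5 := by
          rw [natDegree_map_eq_of_injective hφ]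
          exact natDegree_toPoly_le v
        rw [hD, natDegree_mul (mul_ne_zero hXr hXr) hD0,
          natDegree_mul hXr hXr, natDegree_X_sub_C] at h5
        omega
      refine ⟨fun i : Fin 2 => (X - C r).coeff (i : ℕ), fun i : Fin 4 => D.coeff (i : ℕ), ?_, ?_⟩
      · intro h
        apply hXr
        rw [← toPoly_coeff (X - C r) (le_of_eq (natDegree_X_sub_C r))]
        exact toPoly_eq_zero_iff.mpr h
      · apply toPoly_inj
        rw [toPoly_formMul, toPoly_formMul, toPoly_map,
          toPoly_coeff (X - C r) (le_of_eq (natDegree_X_sub_C r)),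
          toPoly_coeff D hdegD, hD]
end Field
end Aux

end Hidden

section Glue
open Aux Aux2 Aux3 Polynomial

theorem count_key (p : ℕ) [Fact p.Prime] :
    Nat.card {v : Fin 6 → ZMod p // v = 0 ∨ IsSingularQuintic v}
      + ((p - 1) * Nat.card (MSF (ZMod p) 4) + (p - 1) * Nat.card (MSF (ZMod p) 5)) = p ^ 6 := by
  classical
  have hq : Fintype.card (ZMod p) = p := ZMod.card p
  set Pred : (Fin 6 → ZMod p) → Prop :=
    fun v => Squarefree (tp v) ∧ 4 ≤ (tp v).natDegree with hPred
  have hchar : ∀ v : Fin 6 → ZMod p, (v = 0 ∨ IsSingularQuintic v) ↔ ¬ Pred v :=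
    fun v => Aux.singular_iff v
  have hT : Nat.card {v : Fin 6 → ZMod p // v = 0 ∨ IsSingularQuintic v}
      = Nat.card {v : Fin 6 → ZMod p // ¬ Pred v} :=
    Nat.card_congr (Equiv.subtypeEquivRight hchar)
  have hsplit : Nat.card {v : Fin 6 → ZMod p // ¬ Pred v} + Nat.card {v : Fin 6 → ZMod p // Pred v}
      = p ^ 6 := by
    have e := Nat.card_congr (Equiv.sumCompl Pred)
    rw [Nat.card_sum] at e
    rw [Nat.add_comm, e, Nat.card_eq_fintype_card, Fintype.card_fun, hq, Fintype.card_fin]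
  have h45 : Nat.card {v : Fin 6 → ZMod p // Pred v}
      = (p - 1) * Nat.card (MSF (ZMod p) 4) + (p - 1) * Nat.card (MSF (ZMod p) 5) := by
    have hu : Nat.card (ZMod p)ˣ = p - 1 := by
      rw [Nat.card_eq_fintype_card, Fintype.card_units, hq]
    have hstep1 : Nat.card {v : Fin 6 → ZMod p // Pred v}
        = Nat.card {v : Fin 6 → ZMod p //
            (Squarefree (tp v) ∧ (tp v).natDegree = 4)
            ∨ (Squarefree (tp v) ∧ (tp v).natDegree = 5)} := by
      apply Nat.card_congr
      apply Equiv.subtypeEquivRight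
      intro v
      have h5 : (tp v).natDegree ≤ 5 := natDegree_toPoly_le v
      rw [hPred]
      constructor
      · rintro ⟨hsf, hd⟩
        rcases Nat.lt_or_ge (tp v).natDegree 5 with h | h
        · exact Or.inl ⟨hsf, by omega⟩
        · exact Or.inr ⟨hsf, by omega⟩
      · rintro (⟨hsf, hd⟩ | ⟨hsf, hd⟩) <;> exact ⟨hsf, by omega⟩
    rw [hstep1]
    have hdisj : Disjoint (fun v : Fin 6 → ZMod p => Squarefree (tp v) ∧ (tp v).natDegree = 4)
        (fun v : Fin 6 → ZMod p => Squarefree (tp v) ∧ (tp v).natDegree = 5) := by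
      rw [Pi.disjoint_iff]
      intro v
      rw [disjoint_iff_inf_le]
      rintro ⟨⟨-, h4⟩, ⟨-, h5⟩⟩
      omega
    rw [Nat.card_congr (subtypeOrEquiv _ _ hdisj), Nat.card_sum,
      Nat.card_congr (sfdeg_equiv 4 (by norm_num)).symm,
      Nat.card_congr (sfdeg_equiv 5 (by norm_num)).symm,
      Nat.card_prod, Nat.card_prod, hu]
  omega

theorem count_final (p : ℕ) [Fact p.Prime] :
    (Nat.card {v : Fin 6 → ZMod p // v = 0 ∨ IsSingularQuintic v} : ℤ)
      = p ^ 5 + p ^ 4 - p ^ 3 := by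
  have hk := count_key p
  have hm := msf_45 (F := ZMod p)
  have hq : Fintype.card (ZMod p) = p := ZMod.card p
  rw [hq] at hm
  have hp1 : 1 ≤ p := (Fact.out : p.Prime).one_le
  have hc := congrArg (Nat.cast : ℕ → ℤ) hk
  push_cast [Nat.cast_sub hp1] at hc
  linear_combination hc - ((p : ℤ) - 1) * hm

theorem exp_final (p : ℕ) [Fact p.Prime] :
    expSum p 0
      = (Nat.card {v : Fin 6 → ZMod p // v = 0 ∨ IsSingularQuintic v} : ℂ) := by
  classical
  rw [expSum]
  have h0 : ∀ v : Fin 6 → ZMod p, pair 0 v = 0 := by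
    intro v
    simp [pair]
  simp only [h0, ZMod.val_zero, Nat.cast_zero, mul_zero, zero_div, Complex.exp_zero]
  rw [Finset.sum_boole]
  congr 1
  rw [Nat.card_eq_fintype_card, Fintype.card_subtype]

end Glue

/-- The number of binary quintic forms over `𝔽_p` that are zero or singular equals
`p⁵ + p⁴ - p³`; equivalently `S(0) = p⁵ + p⁴ - p³`. -/
theorem stmt13 (p : ℕ) [Fact p.Prime] :
    (Nat.card {v : Fin 6 → ZMod p // v = 0 ∨ IsSingularQuintic v} : ℤ)
        = p ^ 5 + p ^ 4 - p ^ 3 ∧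
      expSum p 0 = (p : ℂ) ^ 5 + (p : ℂ) ^ 4 - (p : ℂ) ^ 3 := by
  refine ⟨count_final p, ?_⟩
  rw [exp_final p]
  have h := count_final p
  have := congrArg (Int.cast : ℤ → ℂ) h
  push_cast at this ⊢
  exact this
end
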